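/- In the quiver with potential of the canonical triangulation of the once-punctured torus, every path of length at least 7 lies in the Jacobian ideal J(S); consequently the Jacobian algebra P(Q,S) is spanned by the residues of paths of length at most 6. -/

import Mathlib

set_option synthInstance.maxHeartbeats 400000
set_option maxHeartbeats 1600000

namespace QPF

/-! ### Quivers and path data

A quiver is a finite directed multigraph.  A *path datum* is a pair `(i, l)` of a base
vertex `i` and a list of arrows `l` (traversed left to right); it is *well-formed* (`WF`)
if consecutive arrows compose and the first arrow starts at `i`.  Well-formed path data
are exactly the paths of the quiver (the empty list encoding the trivial path at `i`). -/

structure Quiv (V : Type) : Type 1 where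
  E : Type
  s : E → V
  t : E → V

variable {V : Type}

namespace Quiv

abbrev Pth (Q : Quiv V) : Type := V × List Q.E

variable {Q : Quiv V}

def WF (Q : Quiv V) (p : Q.Pth) : Prop :=
  List.Chain' (fun e f => Q.t e = Q.s f) p.2 ∧ ∀ e ∈ p.2.head?, Q.s e = p.1

def endV (Q : Quiv V) (p : Q.Pth) : V :=
  p.2.getLast?.elim p.1 Q.t

/-- cyclic paths of positive length -/
def IsCycle (Q : Quiv V) (p : Q.Pth) : Prop := Q.WF p ∧ Q.endV p = p.1 ∧ p.2 ≠ []

/-- the list of vertices visited by a path datum -/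
def visits (Q : Quiv V) (p : Q.Pth) : List V := p.1 :: p.2.map Q.t

theorem wf_nil (Q : Quiv V) (i : V) : Q.WF (i, ([] : List Q.E)) := ⟨List.IsChain.nil, by simp⟩

theorem wf_arrow (Q : Quiv V) (e : Q.E) : Q.WF (Q.s e, [e]) :=
  ⟨List.isChain_singleton e, by simp⟩

@[simp] theorem endV_nil (i : V) : Q.endV (i, ([] : List Q.E)) = i := rfl

@[simp] theorem endV_cons (i : V) (e : Q.E) (l : List Q.E) :
    Q.endV (i, e :: l) = Q.endV (Q.t e, l) := by
  cases l with
  | nil => rfl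
  | cons f l =>
      cases h : (f :: l).getLast? with
      | none => simp at h
      | some x => simp [Quiv.endV, List.getLast?_cons_cons, h]

theorem endV_append (i : V) (a b : List Q.E) :
    Q.endV (i, a ++ b) = Q.endV (Q.endV (i, a), b) := by
  cases h : b.getLast? <;> simp [Quiv.endV, List.getLast?_append, h]

theorem WF.append {i : V} {a b : List Q.E}
    (ha : Q.WF (i, a)) (hb : Q.WF (Q.endV (i, a), b)) : Q.WF (i, a ++ b) := by
  constructor
  · rw [List.Chain', List.isChain_append]
    refine ⟨ha.1, hb.1, ?_⟩
    intro x hx y hy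
    have h1 := hb.2 y hy
    rw [show Q.endV (i, a) = Q.t x by simp [Quiv.endV, Option.mem_def.mp hx]] at h1
    exact h1.symm
  · intro e he
    cases a with
    | nil => exact hb.2 e (by simpa using he)
    | cons f a' =>
        have hef : f = e := by simpa using he
        subst hef
        exact ha.2 f (by simp)

end Quiv

/-! ### The complete path algebra

`Series K Q` is the space of all (possibly infinite) `K`-linear combinations of path data
of `Q`, i.e. arbitrary functions `Q.Pth → K`, with the convolution product.  The complete
path algebra `R⟨⟨Q⟩⟩` is the subalgebra `pathAlg K Q` of series supported on well-formed
path data. -/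

def Series (K : Type) {V : Type} (Q : Quiv V) : Type := Q.Pth → K

namespace Series

variable {K : Type} [Field K] {Q : Quiv V}

instance : AddCommGroup (Series K Q) := inferInstanceAs (AddCommGroup (Q.Pth → K))
instance : Module K (Series K Q) := inferInstanceAs (Module K (Q.Pth → K))

@[simp] theorem add_apply (u v : Series K Q) (p : Q.Pth) : (u + v) p = u p + v p := rfl
@[simp] theorem sub_apply (u v : Series K Q) (p : Q.Pth) : (u - v) p = u p - v p := rfl
@[simp] theorem neg_apply (u : Series K Q) (p : Q.Pth) : (-u) p = -(u p) := rfl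
@[simp] theorem smul_apply (c : K) (u : Series K Q) (p : Q.Pth) : (c • u) p = c * u p := rfl
@[simp] theorem zero_apply (p : Q.Pth) : (0 : Series K Q) p = 0 := rfl

/-- all decompositions of a list into a prefix and a suffix -/
def splits {α : Type} (l : List α) : List (List α × List α) := l.inits.zip l.tails

theorem splits_nil {α : Type} : splits ([] : List α) = [([], [])] := rfl

theorem splits_cons {α : Type} (e : α) (l : List α) :
    splits (e :: l) = ([], e :: l) :: (splits l).map (fun q => (e :: q.1, q.2)) := by
  unfold splits
  rw [List.inits_cons, List.tails_cons, List.zip_cons_cons, List.zip_map_left]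
  rfl

theorem mem_splits {α : Type} {l : List α} {q : List α × List α} (h : q ∈ splits l) :
    q.1 ++ q.2 = l := by
  induction l generalizing q with
  | nil => simp only [splits_nil, List.mem_singleton] at h; subst h; rfl
  | cons e l ih =>
      rw [splits_cons, List.mem_cons] at h
      rcases h with h | h
      · subst h; rfl
      · obtain ⟨r, hr, rfl⟩ := List.mem_map.mp h
        simpa using congrArg (e :: ·) (ih hr)

section SumLemmas

variable {α : Type}

theorem lsum_add (l : List α) (f g : α → K) :
    (l.map fun x => f x + g x).sum = (l.map f).sum + (l.map g).sum := by
  induction l with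
  | nil => simp
  | cons a l ih => simp [ih]; ring

theorem lsum_mul_right (l : List α) (f : α → K) (c : K) :
    (l.map fun x => f x * c).sum = (l.map f).sum * c := by
  induction l with
  | nil => simp
  | cons a l ih => simp [ih]; ring

theorem lsum_mul_left (l : List α) (f : α → K) (c : K) :
    (l.map fun x => c * f x).sum = c * (l.map f).sum := by
  induction l with
  | nil => simp
  | cons a l ih => simp [ih]; ring

end SumLemmas

/-- the convolution product on series -/
protected def mul (u v : Series K Q) : Series K Q := fun p =>
  ((splits p.2).map fun q => u (p.1, q.1) * v (Q.endV (p.1, q.1), q.2)).sum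

/-- the identity: the sum of all trivial paths -/
protected def one : Series K Q := fun p => match p.2 with | [] => 1 | _ => 0

theorem one_def_nil (i : V) : (Series.one : Series K Q) (i, []) = 1 := rfl
theorem one_def_cons (i : V) (e : Q.E) (l : List Q.E) :
    (Series.one : Series K Q) (i, e :: l) = 0 := rfl

/-- key rearrangement: summing over two-step splittings in either order agrees -/
theorem splits_splits_sum {α : Type} (l : List α) (F : List α → List α → List α → K) :
    ((splits l).map fun q => ((splits q.1).map fun r => F r.1 r.2 q.2).sum).sum
      = ((splits l).map fun q => ((splits q.2).map fun r => F q.1 r.1 r.2).sum).sum := by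
  induction l generalizing F with
  | nil => simp [splits_nil]
  | cons e l ih =>
      conv_lhs => rw [splits_cons]
      conv_rhs => rw [splits_cons]
      simp only [List.map_cons, List.sum_cons, List.map_map, Function.comp_def]
      have hL : ∀ q ∈ splits l,
          ((splits (e :: q.1)).map fun r => F r.1 r.2 q.2).sum
            = F [] (e :: q.1) q.2 + ((splits q.1).map fun r => F (e :: r.1) r.2 q.2).sum := by
        intro q _
        rw [splits_cons]
        simp [List.map_map, Function.comp_def]
      rw [List.map_congr_left hL, lsum_add]
      rw [splits_cons]
      simp only [List.map_cons, List.sum_cons, List.map_map, Function.comp_def]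
      rw [ih (fun a b c => F (e :: a) b c)]
      simp [splits_nil]
      ring

theorem mul_assoc' (u v w : Series K Q) :
    Series.mul (Series.mul u v) w = Series.mul u (Series.mul v w) := by
  funext p
  obtain ⟨i, l⟩ := p
  show ((splits l).map fun q =>
          (Series.mul u v) (i, q.1) * w (Q.endV (i, q.1), q.2)).sum
      = ((splits l).map fun q =>
          u (i, q.1) * (Series.mul v w) (Q.endV (i, q.1), q.2)).sum
  have hL : ∀ q ∈ splits l,
      (Series.mul u v) (i, q.1) * w (Q.endV (i, q.1), q.2)
        = ((splits q.1).map fun r =>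
            u (i, r.1) * v (Q.endV (i, r.1), r.2) * w (Q.endV (i, r.1 ++ r.2), q.2)).sum := by
    intro q hq
    show (((splits q.1)).map fun r => u (i, r.1) * v (Q.endV (i, r.1), r.2)).sum
          * w (Q.endV (i, q.1), q.2) = _
    rw [← lsum_mul_right]
    refine congrArg List.sum (List.map_congr_left ?_)
    intro r hr
    rw [show (r.1 ++ r.2 : List Q.E) = q.1 from mem_splits hr]
  have hR : ∀ q ∈ splits l,
      u (i, q.1) * (Series.mul v w) (Q.endV (i, q.1), q.2)
        = ((splits q.2).map fun r =>
            u (i, q.1) * v (Q.endV (i, q.1), r.1) * w (Q.endV (i, q.1 ++ r.1), r.2)).sum := by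
    intro q hq
    show u (i, q.1) * (((splits q.2)).map fun r =>
            v (Q.endV (i, q.1), r.1) * w (Q.endV (Q.endV (i, q.1), r.1), r.2)).sum = _
    rw [← lsum_mul_left]
    refine congrArg List.sum (List.map_congr_left ?_)
    intro r hr
    rw [Quiv.endV_append, mul_assoc]
  rw [List.map_congr_left hL, List.map_congr_left hR]
  exact splits_splits_sum l
    (fun a b c => u (i, a) * v (Q.endV (i, a), b) * w (Q.endV (i, a ++ b), c))

theorem one_mul' (u : Series K Q) : Series.mul Series.one u = u := by
  funext p
  obtain ⟨i, l⟩ := p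
  cases l with
  | nil => show Series.one (i, []) * u (Q.endV (i, ([] : List Q.E)), []) + 0 = u (i, [])
           simp [Series.one]
  | cons e l =>
      show ((splits (e :: l)).map fun q =>
        Series.one (i, q.1) * u (Q.endV (i, q.1), q.2)).sum = u (i, e :: l)
      rw [splits_cons]
      simp only [List.map_cons, List.sum_cons, List.map_map, Function.comp_def]
      have : ∀ q ∈ splits l,
          Series.one (i, e :: q.1) * u (Q.endV (i, e :: q.1), q.2) = 0 := by
        intro q _
        show (0 : K) * _ = 0
        exact zero_mul _
      rw [List.map_congr_left this]
      simp [Series.one]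

theorem mul_one' (u : Series K Q) : Series.mul u Series.one = u := by
  suffices h : ∀ (l : List Q.E) (i : V) (u : Series K Q),
      Series.mul u Series.one (i, l) = u (i, l) by
    funext p; exact h p.2 p.1 u
  intro l
  induction l with
  | nil =>
      intro i u
      show u (i, []) * Series.one (Q.endV (i, ([] : List Q.E)), []) + 0 = u (i, [])
      simp [Series.one]
  | cons e l ih =>
      intro i u
      show ((splits (e :: l)).map fun q =>
        u (i, q.1) * Series.one (Q.endV (i, q.1), q.2)).sum = u (i, e :: l)
      rw [splits_cons]
      simp only [List.map_cons, List.sum_cons, List.map_map, Function.comp_def]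
      have h0 : u (i, ([] : List Q.E)) * Series.one (Q.endV (i, ([] : List Q.E)), e :: l) = 0 := by
        show _ * (0 : K) = 0; exact mul_zero _
      have hrest : ∀ q ∈ splits l,
          u (i, e :: q.1) * Series.one (Q.endV (i, e :: q.1), q.2)
            = (fun pr : Q.Pth => u (i, e :: pr.2)) (Q.t e, q.1)
              * Series.one (Q.endV (Q.t e, q.1), q.2) := by
        intro q _
        rw [Quiv.endV_cons]
      rw [h0, List.map_congr_left hrest, zero_add]
      have := ih (Q.t e) (fun pr : Q.Pth => u (i, e :: pr.2))
      exact this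

theorem left_distrib' (u v w : Series K Q) :
    Series.mul u (v + w) = Series.mul u v + Series.mul u w := by
  funext p
  show ((splits p.2).map fun q =>
      u (p.1, q.1) * (v (Q.endV (p.1, q.1), q.2) + w (Q.endV (p.1, q.1), q.2))).sum = _ + _
  rw [show (fun q : List Q.E × List Q.E =>
      u (p.1, q.1) * (v (Q.endV (p.1, q.1), q.2) + w (Q.endV (p.1, q.1), q.2)))
      = fun q => u (p.1, q.1) * v (Q.endV (p.1, q.1), q.2)
          + u (p.1, q.1) * w (Q.endV (p.1, q.1), q.2) from funext fun q => by ring]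
  rw [lsum_add]
  rfl

theorem right_distrib' (u v w : Series K Q) :
    Series.mul (u + v) w = Series.mul u w + Series.mul v w := by
  funext p
  show ((splits p.2).map fun q =>
      (u (p.1, q.1) + v (p.1, q.1)) * w (Q.endV (p.1, q.1), q.2)).sum = _ + _
  rw [show (fun q : List Q.E × List Q.E =>
      (u (p.1, q.1) + v (p.1, q.1)) * w (Q.endV (p.1, q.1), q.2))
      = fun q => u (p.1, q.1) * w (Q.endV (p.1, q.1), q.2)
          + v (p.1, q.1) * w (Q.endV (p.1, q.1), q.2) from funext fun q => by ring]
  rw [lsum_add]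
  rfl

theorem zero_mul' (u : Series K Q) : Series.mul 0 u = 0 := by
  funext p
  show ((splits p.2).map fun q => (0 : K) * u (Q.endV (p.1, q.1), q.2)).sum = 0
  refine List.sum_eq_zero ?_
  intro x hx
  obtain ⟨q, _, rfl⟩ := List.mem_map.mp hx
  exact zero_mul _

theorem mul_zero' (u : Series K Q) : Series.mul u 0 = 0 := by
  funext p
  show ((splits p.2).map fun q => u (p.1, q.1) * (0 : K)).sum = 0
  refine List.sum_eq_zero ?_
  intro x hx
  obtain ⟨q, _, rfl⟩ := List.mem_map.mp hx
  exact mul_zero _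

instance instRing : Ring (Series K Q) :=
  { (inferInstance : AddCommGroup (Series K Q)) with
    mul := Series.mul
    one := Series.one
    mul_assoc := mul_assoc'
    one_mul := one_mul'
    mul_one := mul_one'
    left_distrib := left_distrib'
    right_distrib := right_distrib'
    zero_mul := zero_mul'
    mul_zero := mul_zero' }

@[simp] theorem mul_apply (u v : Series K Q) (p : Q.Pth) :
    (u * v) p = ((splits p.2).map fun q =>
      u (p.1, q.1) * v (Q.endV (p.1, q.1), q.2)).sum := rfl

@[simp] theorem one_apply_nil (i : V) : (1 : Series K Q) (i, []) = 1 := rfl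
@[simp] theorem one_apply_cons (i : V) (e : Q.E) (l : List Q.E) :
    (1 : Series K Q) (i, e :: l) = 0 := rfl

instance instAlgebra : Algebra K (Series K Q) := by
  refine Algebra.ofModule ?_ ?_
  · intro c u v
    funext p
    show ((splits p.2).map fun q => (c * u (p.1, q.1)) * v (Q.endV (p.1, q.1), q.2)).sum
        = c * ((splits p.2).map fun q => u (p.1, q.1) * v (Q.endV (p.1, q.1), q.2)).sum
    rw [← lsum_mul_left]
    exact congrArg List.sum (List.map_congr_left fun q _ => by ring)
  · intro c u v
    funext p
    show ((splits p.2).map fun q => u (p.1, q.1) * (c * v (Q.endV (p.1, q.1), q.2))).sum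
        = c * ((splits p.2).map fun q => u (p.1, q.1) * v (Q.endV (p.1, q.1), q.2)).sum
    rw [← lsum_mul_left]
    exact congrArg List.sum (List.map_congr_left fun q _ => by ring)

end Series

section PathAlg

variable {K : Type} [Field K] {Q : Quiv V}

open Series

/-- The complete path algebra `R⟨⟨Q⟩⟩`: series supported on well-formed path data. -/
def pathAlg (K : Type) [Field K] (Q : Quiv V) : Subalgebra K (Series K Q) :=
  { carrier := {u | ∀ p : Q.Pth, ¬ Q.WF p → u p = 0}
    add_mem' := fun {u v} hu hv p hp => by
      simp only [Set.mem_setOf_eq] at hu hv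
      show u p + v p = 0
      rw [hu p hp, hv p hp, add_zero]
    zero_mem' := fun p _ => rfl
    one_mem' := fun p hp => by
      obtain ⟨i, l⟩ := p
      cases l with
      | nil => exact absurd (Quiv.wf_nil Q i) hp
      | cons e l => rfl
    mul_mem' := fun {u v} hu hv p hp => by
      simp only [Set.mem_setOf_eq] at hu hv
      show ((splits p.2).map fun q =>
        u (p.1, q.1) * v (Q.endV (p.1, q.1), q.2)).sum = 0
      refine List.sum_eq_zero ?_
      intro x hx
      obtain ⟨q, hq, rfl⟩ := List.mem_map.mp hx
      by_cases h1 : Q.WF (p.1, q.1)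
      · by_cases h2 : Q.WF (Q.endV (p.1, q.1), q.2)
        · exact absurd (by
            have := Quiv.WF.append h1 h2
            rwa [mem_splits hq] at this) hp
        · rw [hv _ h2, mul_zero]
      · rw [hu _ h1, zero_mul]
    algebraMap_mem' := fun c p hp => by
      rw [Algebra.algebraMap_eq_smul_one]
      show c * (1 : Series K Q) p = 0
      obtain ⟨i, l⟩ := p
      cases l with
      | nil => exact absurd (Quiv.wf_nil Q i) hp
      | cons e l => show c * 0 = 0; rw [mul_zero] }

theorem mem_pathAlg_iff {u : Series K Q} :
    u ∈ pathAlg K Q ↔ ∀ p : Q.Pth, ¬ Q.WF p → u p = 0 := Iff.rfl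

open Classical in
/-- the characteristic series of a single path datum -/
noncomputable def unitS (p : Q.Pth) : Series K Q := fun q => if q = p then 1 else 0

theorem unitS_mem {p : Q.Pth} (hp : Q.WF p) : (unitS p : Series K Q) ∈ pathAlg K Q := by
  intro q hq
  unfold unitS
  split
  · next h => subst h; exact absurd hp hq
  · rfl

/-- the idempotent of a vertex, i.e. the trivial path at `i` -/
noncomputable def vtxS (i : V) : Series K Q := unitS (i, [])

theorem vtxS_mem (i : V) : (vtxS i : Series K Q) ∈ pathAlg K Q :=
  unitS_mem (Quiv.wf_nil Q i)

/-- the trivial path at `i` as an element of the complete path algebra -/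
noncomputable def vtxPA (K : Type) [Field K] (Q : Quiv V) (i : V) : pathAlg K Q :=
  ⟨vtxS i, vtxS_mem i⟩

/-- the path `p` as an element of the complete path algebra -/
noncomputable def unitPA {p : Q.Pth} (hp : Q.WF p) : pathAlg K Q :=
  ⟨unitS p, unitS_mem hp⟩

/-- the arrow `e` as an element of the complete path algebra -/
noncomputable def arrowPA (K : Type) [Field K] (Q : Quiv V) (e : Q.E) : pathAlg K Q :=
  unitPA (Quiv.wf_arrow Q e)

/-- A potential: a series all of whose terms are cyclic paths of positive length. -/
def IsPotential (S : Series K Q) : Prop := ∀ p : Q.Pth, S p ≠ 0 → Q.IsCycle p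

/-- `q` is obtained from the cyclic path `p` by a rotation -/
def RotOf (Q : Quiv V) (p q : Q.Pth) : Prop :=
  ∃ a b : List Q.E, p.2 = a ++ b ∧ q = (Q.endV (p.1, a), b ++ a)

/-- A quiver with potential `(Q, S)`: `S` is a potential no two of whose terms
are cyclically equivalent paths. -/
def IsQP (S : Series K Q) : Prop :=
  IsPotential S ∧ ∀ p q : Q.Pth, S p ≠ 0 → S q ≠ 0 → p ≠ q → ¬ RotOf Q p q

/-- Closure in the `m`-adic topology (`m` = ideal generated by the arrows):
`u` lies in `madicClosure T` iff for every `n` it agrees with some element of `T`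
on all paths of length `< n`. -/
def madicClosure (T : Set (Series K Q)) : Set (Series K Q) :=
  {u | ∀ n : ℕ, ∃ v ∈ T, ∀ p : Q.Pth, p.2.length < n → u p = v p}

/-- the set of differences `c - c'` where `c'` is a rotation of the cyclic path `c` -/
def rotDiffSet (K : Type) [Field K] (Q : Quiv V) : Set (Series K Q) :=
  {u | ∃ (i : V) (a b : List Q.E), Q.IsCycle (i, a ++ b) ∧
    u = unitS (i, a ++ b) - unitS (Q.endV (i, a), b ++ a)}

/-- Cyclic equivalence of potentials: the difference lies in the closure of the span of
all differences `a₁⋯a_d - a₂⋯a_d a₁`. -/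
def CyclicEquiv (S S' : Series K Q) : Prop :=
  S - S' ∈ madicClosure ↑(Submodule.span K (rotDiffSet K Q))

/-- A right-equivalence between the QPs `(Q, S)` and `(Q', S')` on the same vertex set:
an algebra isomorphism of the complete path algebras fixing the vertex idempotents and
sending `S` to a potential cyclically equivalent to `S'`. -/
structure QPEquiv (Q Q' : Quiv V) (S : pathAlg K Q) (S' : pathAlg K Q') where
  φ : pathAlg K Q ≃ₐ[K] pathAlg K Q'
  fix : ∀ i : V, φ (vtxPA K Q i) = vtxPA K Q' i
  cyc : CyclicEquiv ((φ S : pathAlg K Q') : Series K Q') (S' : Series K Q')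

end PathAlg

/-! ### Cyclic derivatives and Jacobian ideals -/

section Jacobian

variable {K : Type} [Field K] {Q : Quiv V}

open Series

open Classical in
/-- The cyclic derivative `∂ₑ(S)` of a potential `S` with respect to the arrow `e`:
for a cyclic path `c = q ++ [e] ++ r` it contributes the rotated path `r ++ q` (running
from `Q.t e` to `Q.s e`).  (For a potential `S` the result is automatically supported on
well-formed paths, which is built into the formula.) -/
noncomputable def cycDeriv (S : Series K Q) (e : Q.E) : Series K Q := fun p =>
  if Q.WF p ∧ p.1 = Q.t e then
    ((splits p.2).map fun q => S (Q.endV (p.1, q.1), q.2 ++ e :: q.1)).sum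
  else 0

theorem cycDeriv_mem (S : Series K Q) (e : Q.E) : cycDeriv S e ∈ pathAlg K Q := by
  intro p hp
  unfold cycDeriv
  rw [if_neg (fun h => hp h.1)]

/-- the cyclic derivative as an element of the complete path algebra -/
noncomputable def cycDerivPA (S : pathAlg K Q) (e : Q.E) : pathAlg K Q :=
  ⟨cycDeriv (S : Series K Q) e, cycDeriv_mem _ e⟩

/-- the set of finite sums `∑ aᵢ * gᵢ * bᵢ` with `gᵢ ∈ T`: the two-sided ideal
generated by `T` in a (unital) ring -/
def twoSidedSpan {R : Type} [Ring R] (T : Set R) : Set R :=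
  {x | ∃ l : List (R × R × R), (∀ q ∈ l, q.2.1 ∈ T) ∧
    (l.map fun q => q.1 * q.2.1 * q.2.2).sum = x}

/-- closure in the `m`-adic topology, for subsets of the complete path algebra -/
def madicClosurePA (T : Set (pathAlg K Q)) : Set (pathAlg K Q) :=
  {u | ∀ n : ℕ, ∃ v ∈ T, ∀ p : Q.Pth, p.2.length < n →
    (u : Series K Q) p = (v : Series K Q) p}

/-- The Jacobian ideal `J(S)` (as a subset of the complete path algebra): the `m`-adic
closure of the two-sided ideal generated by the cyclic derivatives of `S`. -/
def jacobSet (S : pathAlg K Q) : Set (pathAlg K Q) :=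
  madicClosurePA (twoSidedSpan (Set.range (cycDerivPA S)))

end Jacobian

/-! ### Restriction -/

section Restriction

variable {K : Type} [Field K]

/-- The restriction `Q|_I` of the quiver `Q` to a subset `I` of its vertex set: the
vertex set is unchanged, and only the arrows with head and tail in `I` are kept. -/
def Quiv.restrict (Q : Quiv V) (I : Set V) : Quiv V where
  E := {e : Q.E // Q.s e ∈ I ∧ Q.t e ∈ I}
  s e := Q.s e.1
  t e := Q.t e.1

variable {Q : Quiv V} {I : Set V}

theorem pmap_subtype_val {alpha : Type} {P : alpha → Prop} (l : List alpha) (h : ∀ a ∈ l, P a) :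
    (l.pmap (fun a (ha : P a) => (⟨a, ha⟩ : Subtype P)) h).map Subtype.val = l := by
  induction l with
  | nil => rfl
  | cons a l ih => simp [ih]

theorem Quiv.wf_restrict {i : V} {l : List (Q.restrict I).E} :
    (Q.restrict I).WF (i, l) ↔ Q.WF (i, l.map Subtype.val) := by
  unfold Quiv.WF
  constructor
  · rintro ⟨h1, h2⟩
    refine ⟨(List.isChain_map _).mpr h1, ?_⟩
    intro e he
    erw [List.head?_map] at he
    obtain ⟨f, hf, rfl⟩ := Option.map_eq_some_iff.mp (Option.mem_def.mp he)
    exact h2 f hf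
  · rintro ⟨h1, h2⟩
    refine ⟨(List.isChain_map _).mp h1, ?_⟩
    intro e he
    refine h2 e.1 ?_
    erw [List.head?_map]
    exact Option.mem_def.mpr (Option.map_eq_some_iff.mpr ⟨e, Option.mem_def.mp he, rfl⟩)

/-- restriction `ρ_I` of a series: evaluate on the underlying path of `Q` -/
def resSeries (I : Set V) (u : Series K Q) : Series K (Q.restrict I) :=
  fun p => u (p.1, p.2.map Subtype.val)

theorem resSeries_mem {u : Series K Q} (hu : u ∈ pathAlg K Q) :
    resSeries I u ∈ pathAlg K (Q.restrict I) := by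
  intro p hp
  exact hu _ (fun h => hp (Quiv.wf_restrict.mpr h))

/-- restriction `ρ_I : R⟨⟨Q⟩⟩ → R⟨⟨Q|_I⟩⟩` on the complete path algebra -/
def resPA (I : Set V) (u : pathAlg K Q) : pathAlg K (Q.restrict I) :=
  ⟨resSeries I (u : Series K Q), resSeries_mem u.2⟩

open Classical in
/-- inclusion of `R⟨⟨Q|_I⟩⟩` into `R⟨⟨Q⟩⟩` (a series on the restricted quiver, viewed as
a series on `Q` supported on paths all of whose arrows have endpoints in `I`) -/
noncomputable def inclSeries (I : Set V) (u : Series K (Q.restrict I)) : Series K Q :=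
  fun p =>
    if h : ∀ e ∈ p.2, Q.s e ∈ I ∧ Q.t e ∈ I then
      u (p.1, p.2.pmap (fun e he => (⟨e, he⟩ : (Q.restrict I).E)) h)
    else 0

theorem inclSeries_mem {u : Series K (Q.restrict I)}
    (hu : u ∈ pathAlg K (Q.restrict I)) : inclSeries I u ∈ pathAlg K Q := by
  intro p hp
  unfold inclSeries
  split
  · next h =>
      refine hu _ ?_
      rw [Quiv.wf_restrict]
      have hmap : (p.2.pmap (fun e he => (⟨e, he⟩ : (Q.restrict I).E)) h).map Subtype.val
          = p.2 := pmap_subtype_val p.2 h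
      erw [hmap]
      exact fun hw => hp (by exact hw)
  · rfl

/-- inclusion on the complete path algebras -/
noncomputable def inclPA (I : Set V) (u : pathAlg K (Q.restrict I)) : pathAlg K Q :=
  ⟨inclSeries I (u : Series K (Q.restrict I)), inclSeries_mem u.2⟩

end Restriction

/-! ### Decorated representations

Every decorated representation of a QP `(Q, S)` (i.e. a finite-dimensional left module
over the Jacobian algebra `P(Q, S)` together with a finite-dimensional module over the
vertex span `R`) is prescribed by: finite-dimensional spaces `M i`, linear maps attached
to the arrows, nilpotency, and annihilation by the cyclic derivatives of `S`; together
with the decoration spaces `D i`.  We encode the arrow maps as endomorphisms of the total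
space `∀ i, M i` supported on the relevant coordinates. -/

section Reps

variable {K : Type} [Field K] [DecidableEq V]

/-- projection onto the `i`-th coordinate, as an endomorphism of `∀ j, M j` -/
def vproj {K : Type} [Field K] (M : V → Type) [∀ i, AddCommGroup (M i)]
    [∀ i, Module K (M i)] [DecidableEq V] (i : V) : (∀ j, M j) →ₗ[K] (∀ j, M j) :=
  (LinearMap.single K M i).comp (LinearMap.proj i)

/-- A representation-with-decoration datum for the quiver `Q`. -/
structure PreRep (K : Type) [Field K] {V : Type} [DecidableEq V] (Q : Quiv V) :
    Type 1 where
  M : V → Type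
  [acg : ∀ i, AddCommGroup (M i)]
  [mod : ∀ i, Module K (M i)]
  fd : ∀ i, FiniteDimensional K (M i)
  act : Q.E → ((∀ i, M i) →ₗ[K] (∀ i, M i))
  supp : ∀ e : Q.E,
    (vproj M (Q.t e)).comp ((act e).comp (vproj M (Q.s e))) = act e
  D : V → Type
  [acgD : ∀ i, AddCommGroup (D i)]
  [modD : ∀ i, Module K (D i)]
  fdD : ∀ i, FiniteDimensional K (D i)

attribute [instance] PreRep.acg PreRep.mod PreRep.acgD PreRep.modD

namespace PreRep

variable {Q : Quiv V} (N : PreRep K Q)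

/-- action of a list of arrows (applied left to right) -/
def listAct (l : List Q.E) : (∀ i, N.M i) →ₗ[K] (∀ i, N.M i) :=
  l.foldl (fun T e => (N.act e).comp T) LinearMap.id

/-- action of a path datum (project to the base vertex, then traverse the arrows) -/
def pAct (p : Q.Pth) : (∀ i, N.M i) →ₗ[K] (∀ i, N.M i) :=
  (N.listAct p.2).comp (vproj N.M p.1)

/-- the arrow `e`, as a map `M (s e) → M (t e)` -/
def actHom (e : Q.E) : N.M (Q.s e) →ₗ[K] N.M (Q.t e) :=
  (LinearMap.proj (Q.t e)).comp ((N.act e).comp (LinearMap.single K N.M (Q.s e)))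

/-- nilpotency: all sufficiently long paths act as zero -/
def Nilpotent : Prop := ∃ r : ℕ, ∀ l : List Q.E, r ≤ l.length → N.listAct l = 0

/-- `ActsAs N u T`: the (essentially finite) sum `∑_p u p • pAct p` is defined
and equal to `T`; i.e. the series `u` acts on `N` as the operator `T` -/
def ActsAs (u : Series K Q) (T : (∀ i, N.M i) →ₗ[K] (∀ i, N.M i)) : Prop :=
  ∃ fs : Finset Q.Pth, (∀ p ∉ fs, u p • N.pAct p = 0) ∧
    (∑ p ∈ fs, u p • N.pAct p) = T

/-- the series `u` annihilates `N` -/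
def AnnihilatedBy (u : Series K Q) : Prop := N.ActsAs u 0

/-- `N` satisfies (is annihilated by) the cyclic derivatives of the potential `S` -/
def SatisfiesCycDerivs (S : Series K Q) : Prop :=
  ∀ e : Q.E, N.AnnihilatedBy (cycDeriv S e)

/-- `N` is (the datum of) a decorated representation of the QP `(Q, S)`: a nilpotent
representation annihilated by the cyclic derivatives of `S` (equivalently, by the
Jacobian ideal `J(S)`), together with the decoration. -/
def IsDec (S : Series K Q) : Prop := N.Nilpotent ∧ N.SatisfiesCycDerivs S

/-- `I`-path-restrictability: every (well-formed) path with endpoints in `I` passing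
through a vertex outside `I` acts as zero. -/
def PathRestrictable (I : Set V) : Prop :=
  ∀ p : Q.Pth, Q.WF p → p.1 ∈ I → Q.endV p ∈ I →
    (∃ k ∈ Q.visits p, k ∉ I) → N.pAct p = 0

end PreRep

/-- A right-equivalence between decorated representations `N` of `(Q, S)` and `N'` of
`(Q', S')`: a right-equivalence `φ` of the QPs, a compatible vector-space isomorphism
`ψ` of the underlying modules (i.e. `ψ ∘ u_M = φ(u)_{M'} ∘ ψ` for all `u ∈ R⟨⟨Q⟩⟩`),
and an `R`-module isomorphism `η` of the decorations. -/
structure RepEquiv (Q Q' : Quiv V) (S : pathAlg K Q) (S' : pathAlg K Q')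
    (N : PreRep K Q) (N' : PreRep K Q') : Type 1 where
  qp : QPEquiv Q Q' S S'
  ψ : (∀ i, N.M i) ≃ₗ[K] (∀ i, N'.M i)
  compat : ∀ (u : pathAlg K Q) (T T'),
    N.ActsAs (u : Series K Q) T → N'.ActsAs ((qp.φ u : pathAlg K Q') : Series K Q') T' →
    ∀ x, ψ (T x) = T' (ψ x)
  η : ∀ i, N.D i ≃ₗ[K] N'.D i

/-- decorated representations are right-equivalent -/
def RepRightEquivalent (Q Q' : Quiv V) (S : pathAlg K Q) (S' : pathAlg K Q')
    (N : PreRep K Q) (N' : PreRep K Q') : Prop :=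
  Nonempty (RepEquiv Q Q' S S' N N')

section Sandwich

variable {M : V → Type} [∀ i, AddCommGroup (M i)] [∀ i, Module K (M i)]

theorem sandwich_supp (a b : V) (f : M a →ₗ[K] M b) :
    (vproj M b).comp
        (((LinearMap.single K M b).comp (f.comp (LinearMap.proj a))).comp (vproj M a))
      = (LinearMap.single K M b).comp (f.comp (LinearMap.proj a)) := by
  ext x : 1
  simp [vproj]

end Sandwich

open Classical in
/-- the submodule family realizing the restriction to `I`: everything over `I`,
zero outside -/
noncomputable def resMod {Q : Quiv V} (N : PreRep K Q) (I : Set V) (i : V) :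
    Submodule K (N.M i) :=
  if i ∈ I then ⊤ else ⊥

/-- Restriction of a representation to a vertex subset `I`: the spaces over vertices of
`I` are kept, the others are replaced by `0`; arrows of `Q|_I` act as before; the
decoration is unchanged. -/
noncomputable def PreRep.restrict {Q : Quiv V} (N : PreRep K Q) (I : Set V) :
    PreRep K (Q.restrict I) where
  M i := ↥(resMod N I i)
  fd i := letI := N.fd i; inferInstance
  act e :=
    (LinearMap.single K (fun i => ↥(resMod N I i)) (Q.t e.1)).comp
      ((LinearMap.codRestrict (resMod N I (Q.t e.1))
          ((N.actHom e.1).comp (Submodule.subtype (resMod N I (Q.s e.1))))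
          (fun x => by
            unfold resMod
            rw [if_pos e.2.2]
            exact Submodule.mem_top)).comp
        (LinearMap.proj (Q.s e.1)))
  supp e := sandwich_supp (Q.s e.1) (Q.t e.1) _
  D := N.D
  fdD := N.fdD

end Reps

/-! ### Direct sums, trivial and reduced QPs, reduced parts -/

section Splitting

variable {K : Type} [Field K]

/-- direct sum of two quivers on the same vertex set -/
def Quiv.sum (Qa Qc : Quiv V) : Quiv V where
  E := Qa.E ⊕ Qc.E
  s := Sum.elim Qa.s Qc.s
  t := Sum.elim Qa.t Qc.t

open Classical in
/-- a series on `Qa`, viewed as a series on `Qa ⊕ Qc` (gated by well-formedness;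
for series supported on well-formed paths this is the canonical embedding) -/
noncomputable def sumInl (Qa Qc : Quiv V) (u : Series K Qa) :
    Series K (Qa.sum Qc) := fun p =>
  if (Qa.sum Qc).WF p then
    (if h : ∀ e ∈ p.2, e.isLeft = true then
      u (p.1, p.2.pmap (fun e he => Sum.getLeft e he) h)
    else 0)
  else 0

open Classical in
/-- a series on `Qc`, viewed as a series on `Qa ⊕ Qc` -/
noncomputable def sumInr (Qa Qc : Quiv V) (u : Series K Qc) :
    Series K (Qa.sum Qc) := fun p =>
  if (Qa.sum Qc).WF p then
    (if h : ∀ e ∈ p.2, e.isRight = true then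
      u (p.1, p.2.pmap (fun e he => Sum.getRight e he) h)
    else 0)
  else 0

theorem sumInl_mem (Qa Qc : Quiv V) (u : Series K Qa) :
    sumInl Qa Qc u ∈ pathAlg K (Qa.sum Qc) := by
  intro p hp; unfold sumInl; rw [if_neg hp]

theorem sumInr_mem (Qa Qc : Quiv V) (u : Series K Qc) :
    sumInr Qa Qc u ∈ pathAlg K (Qa.sum Qc) := by
  intro p hp; unfold sumInr; rw [if_neg hp]

/-- direct sum `S ⊕ T` of two potentials, as an element of the complete path algebra of
the direct sum quiver -/
noncomputable def sumPA {Qa Qc : Quiv V} (Sa : pathAlg K Qa) (Tc : pathAlg K Qc) :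
    pathAlg K (Qa.sum Qc) :=
  ⟨sumInl Qa Qc (Sa : Series K Qa) + sumInr Qa Qc (Tc : Series K Qc),
    add_mem (sumInl_mem _ _ _) (sumInr_mem _ _ _)⟩

/-- the inclusion `R⟨⟨Qa⟩⟩ → R⟨⟨Qa ⊕ Qc⟩⟩` on path algebras -/
noncomputable def sumInlPA {Qa Qc : Quiv V} (u : pathAlg K Qa) :
    pathAlg K (Qa.sum Qc) :=
  ⟨sumInl Qa Qc (u : Series K Qa), sumInl_mem _ _ _⟩

/-- a reduced QP: the degree-2 component of the potential vanishes -/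
def IsReduced {Q : Quiv V} (S : Series K Q) : Prop :=
  ∀ p : Q.Pth, S p ≠ 0 → p.2.length ≠ 2

/-- a trivial QP: the potential is a sum of 2-cycles whose cyclic derivatives span the
arrow span of the quiver -/
def IsTrivialQP (Q : Quiv V) (S : Series K Q) : Prop :=
  IsPotential S ∧ (∀ p : Q.Pth, S p ≠ 0 → p.2.length = 2) ∧
  ∀ e : Q.E, (unitS (Q.s e, [e]) : Series K Q) ∈
    Submodule.span K (Set.range (cycDeriv S))

variable [DecidableEq V]

/-- Witness that `(Qr, Sr, Nr)` is (a realization of) the *reduced part* of the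
decorated representation `N` of `(Q, S)`: there are a trivial QP `(C, T)` and a
right-equivalence `φ` between `(Qr, Sr) ⊕ (C, T)` and `(Q, S)`, such that `Nr` has the
same underlying spaces and decoration as `N` (up to a grading-preserving isomorphism
`ψ`), with each arrow `e` of `Qr` acting as `φ(e)` acts on `N`. -/
structure ReducedPartData (Q : Quiv V) (S : pathAlg K Q)
    (Qr : Quiv V) (Sr : pathAlg K Qr)
    (Nr : PreRep K Qr) (N : PreRep K Q) : Type 1 where
  C : Quiv V
  T : pathAlg K C
  hred : IsReduced (Sr : Series K Qr)
  htriv : IsTrivialQP C (T : Series K C)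
  qp : QPEquiv (Qr.sum C) Q (sumPA Sr T) S
  ψ : (∀ i, Nr.M i) ≃ₗ[K] (∀ i, N.M i)
  grade : ∀ (i : V) (x), ψ (vproj (K := K) Nr.M i x) = vproj (K := K) N.M i (ψ x)
  compat : ∀ (e : Qr.E) (Tm),
    N.ActsAs ((qp.φ (sumInlPA (arrowPA K Qr e)) : pathAlg K Q) : Series K Q) Tm →
    ∀ x, ψ (Nr.act e x) = Tm (ψ x)
  η : ∀ i, Nr.D i ≃ₗ[K] N.D i

/-- the QP-level statement that `(Qr, Sr)` is a reduced part of `(Q, S)` -/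
def IsReducedQPOf (Q : Quiv V) (S : pathAlg K Q) (Qr : Quiv V) (Sr : pathAlg K Qr) :
    Prop :=
  IsReduced (Sr : Series K Qr) ∧ ∃ (C : Quiv V) (T : pathAlg K C),
    IsTrivialQP C (T : Series K C) ∧ Nonempty (QPEquiv (Qr.sum C) Q (sumPA Sr T) S)

end Splitting

/-! ### Premutation and mutation of QPs and of their decorated representations -/

section Premut

variable {K : Type} [Field K]

/-- arrows of `Q` ending at `j` -/
abbrev inArrows (Q : Quiv V) (j : V) : Type := {e : Q.E // Q.t e = j}
/-- arrows of `Q` starting at `j` -/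
abbrev outArrows (Q : Quiv V) (j : V) : Type := {e : Q.E // Q.s e = j}

/-- `Q` has no 2-cycles incident to the vertex `j` -/
def No2CycleAt (Q : Quiv V) (j : V) : Prop :=
  ¬ ∃ p : Q.Pth, Q.IsCycle p ∧ p.2.length = 2 ∧ j ∈ Q.visits p

/-- The premutated quiver `μ̃_j(Q)`: arrows not incident to `j` are kept; for every
`j`-hook (2-path `a` then `b` through `j`) there is a new arrow `[ab] : s a → t b`;
every arrow incident to `j` is replaced by a reversed arrow. -/
def Quiv.premut (Q : Quiv V) (j : V) : Quiv V where
  E := {e : Q.E // Q.s e ≠ j ∧ Q.t e ≠ j} ⊕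
    ((inArrows Q j × outArrows Q j) ⊕ {e : Q.E // Q.s e = j ∨ Q.t e = j})
  s := fun x => match x with
    | .inl e => Q.s e.1
    | .inr (.inl ab) => Q.s ab.1.1
    | .inr (.inr e) => Q.t e.1
  t := fun x => match x with
    | .inl e => Q.t e.1
    | .inr (.inl ab) => Q.t ab.2.1
    | .inr (.inr e) => Q.s e.1

/-- the hook arrow `[ab]` of the premutated quiver -/
def hookE {Q : Quiv V} {j : V} (a : inArrows Q j) (b : outArrows Q j) :
    (Q.premut j).E := .inr (.inl (a, b))

/-- the reversed arrow `b*` (for `b` starting at `j`) -/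
def starOut {Q : Quiv V} {j : V} (b : outArrows Q j) : (Q.premut j).E :=
  .inr (.inr ⟨b.1, Or.inl b.2⟩)

/-- the reversed arrow `a*` (for `a` ending at `j`) -/
def starIn {Q : Quiv V} {j : V} (a : inArrows Q j) : (Q.premut j).E :=
  .inr (.inr ⟨a.1, Or.inr a.2⟩)

/-- Unhooking: replaces each kept arrow by itself and each hook arrow `[ab]` by the
2-path `a b`; undefined (`none`) on lists containing reversed arrows. -/
def unhook (Q : Quiv V) (j : V) : List (Q.premut j).E → Option (List Q.E)
  | [] => some []
  | .inl e :: l => (unhook Q j l).map (e.1 :: ·)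
  | .inr (.inl ab) :: l => (unhook Q j l).map (fun m => ab.1.1 :: ab.2.1 :: m)
  | .inr (.inr _) :: _ => none

/-- the 3-cycle `b* a* [ab]` of the premutated quiver attached to a `j`-hook -/
def hookCycle {Q : Quiv V} (j : V) (ab : inArrows Q j × outArrows Q j) :
    (Q.premut j).Pth :=
  (Q.s ab.1.1, [hookE ab.1 ab.2, starOut ab.2, starIn ab.1])

open Classical in
/-- The premutated potential `μ̃_j(S) = [S] + Δ_j(Q)`: `[S]` is obtained from `S`
(assumed to have no cyclic term starting at `j`) by replacing every `j`-hook by the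
corresponding hook arrow, and `Δ_j(Q) = ∑ b* a* [ab]`.  (The formula is gated by
well-formedness; for a potential `S` this does not change the value.) -/
noncomputable def premutPotential {Q : Quiv V} (j : V) (S : Series K Q) :
    Series K (Q.premut j) := fun p =>
  if (Q.premut j).WF p then
    ((unhook Q j p.2).elim 0 fun m => S (p.1, m)) +
      (if ∃ ab, p = hookCycle j ab then 1 else 0)
  else 0

theorem premutPotential_mem {Q : Quiv V} (j : V) (S : Series K Q) :
    premutPotential j S ∈ pathAlg K (Q.premut j) := by
  intro p hp; unfold premutPotential; rw [if_neg hp]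

/-- the premutated potential as an element of the complete path algebra -/
noncomputable def premutPA {Q : Quiv V} (j : V) (S : pathAlg K Q) :
    pathAlg K (Q.premut j) :=
  ⟨premutPotential j (S : Series K Q), premutPotential_mem j _⟩

variable [DecidableEq V]

namespace PreRep

variable {Q : Quiv V} (N : PreRep K Q)

/-- the action of a path datum of the premutated quiver on `N` (hook arrows acting as the
corresponding 2-paths, reversed arrows acting as zero) -/
noncomputable def pActPre (j : V) (p : (Q.premut j).Pth) :
    (∀ i, N.M i) →ₗ[K] (∀ i, N.M i) :=
  (unhook Q j p.2).elim 0 fun m => N.pAct (p.1, m)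

/-- the series `u` on the premutated quiver acts on `N` as the operator `T` -/
def ActsAsPre (j : V) (u : Series K (Q.premut j))
    (T : (∀ i, N.M i) →ₗ[K] (∀ i, N.M i)) : Prop :=
  ∃ fs : Finset (Q.premut j).Pth, (∀ p ∉ fs, u p • N.pActPre j p = 0) ∧
    (∑ p ∈ fs, u p • N.pActPre j p) = T

variable (j : V)

/-- `M_in = ⊕ M_{s a}`, sum over the arrows `a` ending at `j` -/
def Min : Type := ∀ a : inArrows Q j, N.M (Q.s a.1)

/-- `M_out = ⊕ M_{t b}`, sum over the arrows `b` starting at `j` -/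
def Mout : Type := ∀ b : outArrows Q j, N.M (Q.t b.1)

instance : AddCommGroup (N.Min j) := inferInstanceAs (AddCommGroup (∀ a : inArrows Q j, N.M (Q.s a.1)))
instance : Module K (N.Min j) := inferInstanceAs (Module K (∀ a : inArrows Q j, N.M (Q.s a.1)))
instance : AddCommGroup (N.Mout j) := inferInstanceAs (AddCommGroup (∀ b : outArrows Q j, N.M (Q.t b.1)))
instance : Module K (N.Mout j) := inferInstanceAs (Module K (∀ b : outArrows Q j, N.M (Q.t b.1)))

/-- the map `a : M_in → M_j` assembled from the arrows ending at `j` -/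
noncomputable def ain [Finite Q.E] : N.Min j →ₗ[K] N.M j :=
  letI : Fintype (inArrows Q j) := Fintype.ofFinite _
  ∑ a : inArrows Q j,
    (LinearMap.proj j).comp ((N.act a.1).comp
      ((LinearMap.single K N.M (Q.s a.1)).comp
        (LinearMap.proj (φ := fun a : inArrows Q j => N.M (Q.s a.1)) a)))

/-- the map `b : M_j → M_out` assembled from the arrows starting at `j` -/
noncomputable def bout : N.M j →ₗ[K] N.Mout j :=
  LinearMap.pi fun b : outArrows Q j =>
    (LinearMap.proj (Q.t b.1)).comp ((N.act b.1).comp (LinearMap.single K N.M j))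

open Classical in
/-- the condition that `c : M_out → M_in` is the matrix of the maps given by the actions
of the cyclic derivatives `∂_{[ab]}(μ̃_j S)` -/
noncomputable def IsCFor [Finite Q.E] (S : Series K Q) (c : N.Mout j →ₗ[K] N.Min j) : Prop :=
  ∀ (a : inArrows Q j) (b : outArrows Q j),
    N.ActsAsPre j (cycDeriv (premutPotential j S) (hookE a b))
      ((LinearMap.single K N.M (Q.s a.1)).comp
        (((LinearMap.proj (φ := fun a : inArrows Q j => N.M (Q.s a.1)) a).comp
            (c.comp (LinearMap.single K (fun b : outArrows Q j => N.M (Q.t b.1)) b))).comp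
          (LinearMap.proj (Q.t b.1))))

end PreRep

section BarredSpaces

variable {Q : Quiv V} (N : PreRep K Q) (j : V) [Finite Q.E]

/-- the barred space `M̄_j = ker c / im b ⊕ im c ⊕ ker a / im c ⊕ V_j` of the
premutation of a decorated representation -/
noncomputable abbrev barMj (c : N.Mout j →ₗ[K] N.Min j) : Type :=
  ((↥(LinearMap.ker c)) ⧸
      Submodule.comap (LinearMap.ker c).subtype (LinearMap.range (N.bout j)))
  × ↥(LinearMap.range c)
  × ((↥(LinearMap.ker (N.ain j))) ⧸
      Submodule.comap (LinearMap.ker (N.ain j)).subtype (LinearMap.range c))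
  × N.D j

/-- the barred decoration `V̄_j = ker b / (ker b ∩ im a)` -/
noncomputable abbrev barVj : Type :=
  (↥(LinearMap.ker (N.bout j))) ⧸
    Submodule.comap (LinearMap.ker (N.bout j)).subtype (LinearMap.range (N.ain j))

/-- the map `ā = [-pr; -c; 0; 0] : M_out → M̄_j` (given a retraction `r` onto `ker c`) -/
noncomputable def abar (c : N.Mout j →ₗ[K] N.Min j)
    (r : N.Mout j →ₗ[K] ↥(LinearMap.ker c)) : N.Mout j →ₗ[K] barMj N j c :=
  LinearMap.prod
    (-((Submodule.comap (LinearMap.ker c).subtype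
        (LinearMap.range (N.bout j))).mkQ.comp r))
    (LinearMap.prod (-(c.rangeRestrict))
      (LinearMap.prod 0 0))

/-- the map `b̄ = [0, i, i s, 0] : M̄_j → M_in` (given a section `s` of the projection
`ker a ↠ ker a / im c`) -/
noncomputable def bbar (c : N.Mout j →ₗ[K] N.Min j)
    (sσ : ((↥(LinearMap.ker (N.ain j))) ⧸
        Submodule.comap (LinearMap.ker (N.ain j)).subtype (LinearMap.range c))
      →ₗ[K] ↥(LinearMap.ker (N.ain j))) :
    barMj N j c →ₗ[K] N.Min j :=
  ((LinearMap.range c).subtype.comp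
      ((LinearMap.fst K _ _).comp (LinearMap.snd K _ _)))
  + ((LinearMap.ker (N.ain j)).subtype.comp
      (sσ.comp ((LinearMap.fst K _ _).comp
        ((LinearMap.snd K _ _).comp (LinearMap.snd K _ _)))))

open Classical in
/-- Witness that `Nt` is (a realization of) the premutation `μ̃_j` of the decorated
representation `N` of `(Q, S₀)` (where no cyclic term of `S₀` starts at `j`), following
Derksen–Weyman–Zelevinsky: the spaces away from `j` are unchanged, the space at `j` is
`ker c/im b ⊕ im c ⊕ ker a/im c ⊕ V_j`, kept arrows and hook arrows act as in `N`, and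
the reversed arrows act through the maps `ā`, `b̄` determined by choices of a retraction
`r` and a section `s`. -/
structure PremutRepData (S₀ : Series K Q) (Nt : PreRep K (Q.premut j))
    (N : PreRep K Q) : Type 1 where
  c : N.Mout j →ₗ[K] N.Min j
  hc : N.IsCFor j S₀ c
  r : N.Mout j →ₗ[K] ↥(LinearMap.ker c)
  hr : ∀ x : ↥(LinearMap.ker c), r x.1 = x
  sσ : ((↥(LinearMap.ker (N.ain j))) ⧸
      Submodule.comap (LinearMap.ker (N.ain j)).subtype (LinearMap.range c))
    →ₗ[K] ↥(LinearMap.ker (N.ain j))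
  hs : ∀ y, (Submodule.comap (LinearMap.ker (N.ain j)).subtype
      (LinearMap.range c)).mkQ (sσ y) = y
  ψ : ∀ i : V, i ≠ j → (Nt.M i ≃ₗ[K] N.M i)
  ψj : Nt.M j ≃ₗ[K] barMj N j c
  hInl : ∀ (e : {e : Q.E // Q.s e ≠ j ∧ Q.t e ≠ j}) (x : ∀ i, Nt.M i),
    (ψ (Q.t e.1) e.2.2) ((Nt.act (Sum.inl e) x) (Q.t e.1))
      = N.actHom e.1 ((ψ (Q.s e.1) e.2.1) (x (Q.s e.1)))
  hHook : ∀ (a : inArrows Q j) (b : outArrows Q j)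
      (ha : Q.s a.1 ≠ j) (hb : Q.t b.1 ≠ j) (x : ∀ i, Nt.M i),
    (ψ (Q.t b.1) hb) ((Nt.act (hookE a b) x) (Q.t b.1))
      = (N.act b.1 (N.act a.1 (LinearMap.single K N.M (Q.s a.1)
          ((ψ (Q.s a.1) ha) (x (Q.s a.1)))))) (Q.t b.1)
  hStarOut : ∀ (b : outArrows Q j) (hb : Q.t b.1 ≠ j) (x : ∀ i, Nt.M i),
    ψj ((Nt.act (starOut b) x) j)
      = abar N j c r (LinearMap.single K (fun b : outArrows Q j => N.M (Q.t b.1)) b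
          ((ψ (Q.t b.1) hb) (x (Q.t b.1))))
  hStarIn : ∀ (a : inArrows Q j) (ha : Q.s a.1 ≠ j) (x : ∀ i, Nt.M i),
    (ψ (Q.s a.1) ha) ((Nt.act (starIn a) x) (Q.s a.1))
      = bbar N j c sσ (ψj (x j)) a
  hDec : ∀ i : V, i ≠ j → Nonempty (Nt.D i ≃ₗ[K] N.D i)
  hDecj : Nonempty (Nt.D j ≃ₗ[K] barVj N j)

end BarredSpaces

/-- `N1` (a decorated representation of `(Q1, S1)`) is a mutation `μ_j` of the decorated
representation `N` of `(Q, S)`: after replacing `S` by a cyclically equivalent potential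
`S₀` none of whose terms starts at `j`, `N1` is a reduced part of a premutation of `N`
at `j` (and `(Q1, S1)` a reduced part of the premutated QP). -/
def IsMutationRepOf {Q : Quiv V} [Finite Q.E] (j : V) (S : pathAlg K Q)
    {Q1 : Quiv V} (S1 : pathAlg K Q1) (N1 : PreRep K Q1) (N : PreRep K Q) : Prop :=
  No2CycleAt Q j ∧ ∃ S₀ : pathAlg K Q, IsPotential (S₀ : Series K Q) ∧
    CyclicEquiv ((S₀ : Series K Q)) ((S : Series K Q)) ∧
    (∀ p : Q.Pth, (S₀ : Series K Q) p ≠ 0 → p.1 ≠ j) ∧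
    ∃ Nt : PreRep K (Q.premut j),
      Nonempty (PremutRepData j ((S₀ : Series K Q)) Nt N) ∧
      Nonempty (ReducedPartData (Q.premut j) (premutPA j S₀) Q1 S1 N1 Nt)

/-- `(Q', S')` is a mutation `μ_j` of the QP `(Q, S)`. -/
def IsMutationQPOf {Q : Quiv V} (j : V) (S : pathAlg K Q)
    (Q' : Quiv V) (S' : pathAlg K Q') : Prop :=
  No2CycleAt Q j ∧ ∃ S₀ : pathAlg K Q, IsPotential (S₀ : Series K Q) ∧
    CyclicEquiv ((S₀ : Series K Q)) ((S : Series K Q)) ∧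
    (∀ p : Q.Pth, (S₀ : Series K Q) p ≠ 0 → p.1 ≠ j) ∧
    IsReducedQPOf (Q.premut j) (premutPA j S₀) Q' S'

/-- a quiver is 2-acyclic if it has no 2-cycles -/
def TwoAcyclic (Q : Quiv V) : Prop := ¬ ∃ p : Q.Pth, Q.IsCycle p ∧ p.2.length = 2

end Premut

end QPF


namespace QPF

/-! ### The QP of the canonical (ideal) triangulation of the once-punctured torus

Vertices `0, 1, 2`; arrows `c1 = 0, c2 = 1 : 0 → 1`, `b1 = 2, b2 = 3 : 1 → 2`,
`a1 = 4, a2 = 5 : 2 → 0`.  Paths are composed as functions (right-to-left), so the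
3-cycle `a1 b1 c1` is traversed `c1`, then `b1`, then `a1`; in list form (arrows listed
in traversal order, based at the start vertex) it is `(0, [0, 2, 4])`. -/

def torusQ : Quiv (Fin 3) where
  E := Fin 6
  s := fun e => ![0, 0, 1, 1, 2, 2] e
  t := fun e => ![1, 1, 2, 2, 0, 0] e

/-- the 3-cycle `a1 b1 c1` -/
def torusCyc1 : torusQ.Pth := ((0 : Fin 3), ([0, 2, 4] : List (Fin 6)))
/-- the 3-cycle `a2 b2 c2` -/
def torusCyc2 : torusQ.Pth := ((0 : Fin 3), ([1, 3, 5] : List (Fin 6)))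
/-- the 6-cycle `a1 b2 c1 a2 b1 c2` -/
def torusCyc6 : torusQ.Pth := ((0 : Fin 3), ([1, 2, 5, 0, 3, 4] : List (Fin 6)))
/-- the 6-cycle `a2 b1 c2 a1 b2 c1` -/
def torusCyc6' : torusQ.Pth := ((0 : Fin 3), ([0, 3, 4, 1, 2, 5] : List (Fin 6)))

theorem torus_wf1 : torusQ.WF torusCyc1 := by
  constructor <;> simp [torusCyc1, torusQ, List.Chain', List.isChain_cons_cons, Quiv.WF] <;> first | decide | (intro e he; cases he; rfl)
theorem torus_wf2 : torusQ.WF torusCyc2 := by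
  constructor <;> simp [torusCyc2, torusQ, List.Chain', List.isChain_cons_cons, Quiv.WF] <;> first | decide | (intro e he; cases he; rfl)
theorem torus_wf6 : torusQ.WF torusCyc6 := by
  constructor <;> simp [torusCyc6, torusQ, List.Chain', List.isChain_cons_cons, Quiv.WF] <;> first | decide | (intro e he; cases he; rfl)
theorem torus_wf6' : torusQ.WF torusCyc6' := by
  constructor <;> simp [torusCyc6', torusQ, List.Chain', List.isChain_cons_cons, Quiv.WF] <;> first | decide | (intro e he; cases he; rfl)

variable (K : Type) [Field K]

/-- the potential `S = a1 b1 c1 + a2 b2 c2 + x · a1 b2 c1 a2 b1 c2` of the canonical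
triangulation of the once-punctured torus -/
noncomputable def torusS (x : K) : Series K torusQ :=
  unitS torusCyc1 + unitS torusCyc2 + x • unitS torusCyc6

theorem torusS_mem (x : K) : torusS K x ∈ pathAlg K torusQ := by
  refine add_mem (add_mem (unitS_mem torus_wf1) (unitS_mem torus_wf2)) ?_
  exact Subalgebra.smul_mem _ (unitS_mem torus_wf6) x

/-- the canonical once-punctured-torus potential as an element of `R⟨⟨Q⟩⟩` -/
noncomputable def torusSPA (x : K) : pathAlg K torusQ := ⟨torusS K x, torusS_mem K x⟩

end QPF

namespace QPF

/-- the finite set of lists of arrows of length at most `n` -/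
def listsUpTo (n : ℕ) : Finset (List (Fin 6)) :=
  match n with
  | 0 => {[]}
  | n + 1 => {[]} ∪ (Finset.univ ×ˢ listsUpTo n).image fun q => q.1 :: q.2

/-- the finite set of path data of the once-punctured-torus quiver of length at most `n` -/
def torusPathsUpTo (n : ℕ) : Finset torusQ.Pth :=
  (Finset.univ : Finset (Fin 3)) ×ˢ listsUpTo n

end QPF

/-! Every cyclic derivative of `S` has the form `∂_g S = s_g + x · l_g` with `s_g` a path of
length 2 (the rest of the 3-cycle through `g`) and `l_g` a path of length 5 (the rest of the
6-cycle), so modulo `J(S)` a subpath `s_g` may be replaced by `-x · l_g` and, as `x ≠ 0`, a subpath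
`l_g` by `-x⁻¹ · s_g`. Call two consecutive arrows matched when they lie on a common 3-cycle.
Near a *switch* (a matched pair of consecutive arrows next to an unmatched one) the matched pair
is some `s_g`; replacing it by `l_g` lengthens the path by 3 and leaves a new switch at the end of
`l_g`. Hence a path with a switch is congruent to multiples of arbitrarily long paths, i.e. lies
in the `m`-adic closure `J(S)`. A path of length `≥ 7` without a switch is either entirely matched,
and then begins with some `s_g`, or entirely unmatched, and then winds around the 6-cycle and
begins with some `l_g`; one replacement creates a switch. Finally, subtracting from a series its
part of length `≤ 6` leaves a limit of combinations of paths of length `≥ 7`. -/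

namespace List

theorem isChain_or_isChain_not_or_exists_xor {α : Type} (R : α → α → Prop) :
    ∀ l : List α, l.IsChain R ∨ l.IsChain (fun a b => ¬R a b) ∨
      ∃ u v a b c, l = u ++ a :: b :: c :: v ∧ Xor (R a b) (R b c)
  | [] => Or.inl .nil
  | [a] => Or.inl (List.isChain_singleton a)
  | a :: b :: l => by
    classical
    rcases isChain_or_isChain_not_or_exists_xor R (b :: l) with h | h | ⟨u, v, a', b', c, hl, hx⟩
    · by_cases hab : R a b
      · exact Or.inl (List.isChain_cons_cons.2 ⟨hab, h⟩)
      · cases l with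
        | nil => exact Or.inr (Or.inl (List.isChain_pair.2 hab))
        | cons c l =>
          exact Or.inr (Or.inr ⟨[], l, a, b, c, rfl, Or.inr ⟨(List.isChain_cons_cons.1 h).1, hab⟩⟩)
    · by_cases hab : R a b
      · cases l with
        | nil => exact Or.inl (List.isChain_pair.2 hab)
        | cons c l =>
          exact Or.inr (Or.inr ⟨[], l, a, b, c, rfl, Or.inl ⟨hab, (List.isChain_cons_cons.1 h).1⟩⟩)
      · exact Or.inr (Or.inl (List.isChain_cons_cons.2 ⟨hab, h⟩))
    · exact Or.inr (Or.inr ⟨a :: u, v, a', b', c, by rw [hl]; rfl, hx⟩)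

theorem IsChain.and {α : Type} {R S : α → α → Prop} :
    ∀ {l : List α}, l.IsChain R → l.IsChain S → l.IsChain fun a b => R a b ∧ S a b
  | [], _, _ => .nil
  | [a], _, _ => List.isChain_singleton a
  | _ :: _ :: _, hR, hS => by
    rw [List.isChain_cons_cons] at hR hS ⊢
    exact ⟨⟨hR.1, hS.1⟩, hR.2.and hS.2⟩

end List

namespace QPF

variable {V : Type}

namespace Quiv

variable {Q : Quiv V}

theorem wf_iff {p : Q.Pth} :
    Q.WF p ↔ p.2.IsChain (fun e f => Q.t e = Q.s f) ∧ ∀ e ∈ p.2.head?, Q.s e = p.1 :=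
  Iff.rfl

theorem WF.tail {i : V} {e : Q.E} {l : List Q.E} (h : Q.WF (i, e :: l)) : Q.WF (Q.t e, l) := by
  obtain ⟨hc, _⟩ := wf_iff.1 h
  rw [List.isChain_cons] at hc
  exact ⟨hc.2, fun f hf => (hc.1 f hf).symm⟩

theorem WF.of_append {i : V} {a b : List Q.E} (h : Q.WF (i, a ++ b)) :
    Q.WF (i, a) ∧ Q.WF (Q.endV (i, a), b) := by
  induction a generalizing i with
  | nil => exact ⟨Q.wf_nil i, h⟩
  | cons e a ih =>
      obtain ⟨ha, hb⟩ := ih h.tail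
      refine ⟨⟨h.1.prefix ⟨b, rfl⟩, fun f hf => ?_⟩, by rwa [endV_cons]⟩
      obtain rfl : e = f := by simpa using hf
      exact h.2 e rfl

theorem WF.t_eq_s {i : V} {w u v : List Q.E} {a b : Q.E} (h : Q.WF (i, w))
    (hw : w = u ++ a :: b :: v) : Q.t a = Q.s b :=
  (List.isChain_cons_cons.mp (h.1.infix (show [a, b] <:+: w from ⟨u, v, by simp [hw]⟩))).1

theorem wf_append_append_iff {i j : V} {u a v : List Q.E} (ha : Q.WF (j, a)) (hne : a ≠ []) :
    Q.WF (i, u ++ a ++ v) ↔ Q.WF (i, u) ∧ Q.endV (i, u) = j ∧ Q.WF (Q.endV (j, a), v) := by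
  obtain ⟨e, a', rfl⟩ := List.exists_cons_of_ne_nil hne
  constructor
  · intro h
    rw [List.append_assoc] at h
    obtain ⟨hu, hav⟩ := h.of_append
    have hj : Q.endV (i, u) = j := (hav.2 e rfl).symm.trans (ha.2 e rfl)
    subst hj
    exact ⟨hu, rfl, hav.of_append.2⟩
  · rintro ⟨hu, rfl, hv⟩
    exact (hu.append ha).append (by rwa [endV_append])

end Quiv

namespace Series

variable {α : Type}

theorem mem_splits_iff {l : List α} {q : List α × List α} : q ∈ splits l ↔ q.1 ++ q.2 = l :=
  List.mem_zip_inits_tails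

theorem nodup_splits : ∀ l : List α, (splits l).Nodup
  | [] => by simp [splits_nil]
  | e :: l => by
    rw [splits_cons, List.nodup_cons]
    exact ⟨by simp, (nodup_splits l).map fun q r h => by simpa [Prod.ext_iff] using h⟩

open Classical in
theorem sum_splits_eq_single {K : Type} [AddCommMonoid K] (l a b : List α)
    (f : List α × List α → K) (hf : ∀ q, q ≠ (a, b) → f q = 0) :
    ((splits l).map f).sum = if a ++ b = l then f (a, b) else 0 := by
  rw [← List.sum_toFinset _ (nodup_splits l)]
  split_ifs with h
  · exact Finset.sum_eq_single_of_mem _ (List.mem_toFinset.2 (mem_splits_iff.2 h))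
      fun q _ hq => hf q hq
  · refine Finset.sum_eq_zero fun q hq => hf q ?_
    rintro rfl
    exact h (mem_splits_iff.1 (List.mem_toFinset.1 hq))

variable {K : Type} [Field K] {Q : Quiv V}

theorem sum_apply {ι : Type} (s : Finset ι) (f : ι → Series K Q) (p : Q.Pth) :
    (∑ i ∈ s, f i) p = ∑ i ∈ s, f i p :=
  Finset.sum_apply p s f

end Series

section PathSeries

open Series

variable {K : Type} [Field K] {Q : Quiv V}

theorem unitS_apply_self (p : Q.Pth) : (unitS p : Series K Q) p = 1 := if_pos rfl

theorem unitS_apply_of_ne {p q : Q.Pth} (h : q ≠ p) : (unitS p : Series K Q) q = 0 := if_neg h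

open Classical in
theorem sum_smul_unitS_apply (s : Finset Q.Pth) (c : Q.Pth → K) (q : Q.Pth) :
    (∑ p ∈ s, c p • unitS p : Series K Q) q = if q ∈ s then c q else 0 := by
  simp only [Series.sum_apply, Series.smul_apply, unitS, mul_ite, mul_one, mul_zero]
  exact Finset.sum_ite_eq s q c

theorem unitS_mul_unitS (i : V) (a b : List Q.E) :
    (unitS (i, a) * unitS (Q.endV (i, a), b) : Series K Q) = unitS (i, a ++ b) := by
  funext ⟨k, l⟩
  rw [mul_apply, sum_splits_eq_single l a b]
  · simp only [unitS, Prod.mk.injEq]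
    split_ifs <;> simp_all
  · rintro ⟨a', b'⟩ hq
    simp only [unitS, Prod.mk.injEq]
    split_ifs <;> simp_all

theorem unitS_mul_unitS_mul_unitS {i j k : V} {u a v : List Q.E}
    (hj : Q.endV (i, u) = j) (hk : Q.endV (j, a) = k) :
    (unitS (i, u) * unitS (j, a) * unitS (k, v) : Series K Q) = unitS (i, u ++ a ++ v) := by
  subst hj hk
  rw [unitS_mul_unitS, ← Quiv.endV_append, unitS_mul_unitS]

theorem cycDeriv_add (S T : Series K Q) (e : Q.E) :
    cycDeriv (S + T) e = cycDeriv S e + cycDeriv T e := by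
  funext p
  rw [Series.add_apply]
  unfold cycDeriv
  split_ifs
  exacts [lsum_add _ _ _, (add_zero 0).symm]

theorem cycDeriv_smul (c : K) (S : Series K Q) (e : Q.E) :
    cycDeriv (c • S) e = c • cycDeriv S e := by
  funext p
  rw [Series.smul_apply]
  unfold cycDeriv
  split_ifs
  exacts [lsum_mul_left _ _ _, (mul_zero c).symm]

theorem cycDeriv_unitS_of_notMem {c : V} {C : List Q.E} {e : Q.E} (he : e ∉ C) :
    cycDeriv (unitS (c, C) : Series K Q) e = 0 := by
  funext p
  unfold cycDeriv
  split_ifs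
  · refine List.sum_eq_zero fun y hy => ?_
    obtain ⟨q, -, rfl⟩ := List.mem_map.mp hy
    refine unitS_apply_of_ne fun h => he ?_
    simp only [Prod.mk.injEq] at h
    simp [← h.2]
  · rfl

theorem cycDeriv_unitS_of_eq_append_cons {c : V} {A B : List Q.E} {e : Q.E}
    (hA : e ∉ A) (hB : e ∉ B) (hwf : Q.WF (Q.t e, B ++ A)) (hc : Q.endV (Q.t e, B) = c) :
    cycDeriv (unitS (c, A ++ e :: B) : Series K Q) e = unitS (Q.t e, B ++ A) := by
  funext ⟨k, l⟩
  unfold cycDeriv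
  split_ifs with h
  · obtain ⟨-, rfl⟩ := h
    rw [sum_splits_eq_single l B A]
    · subst hc
      split_ifs with hl
      · rw [← hl, unitS_apply_self, unitS_apply_self]
      · exact (unitS_apply_of_ne fun h => hl (by simp_all)).symm
    · rintro ⟨b', a'⟩ hq
      refine unitS_apply_of_ne fun h => hq ?_
      simp only [Prod.mk.injEq] at h
      obtain ⟨h1, -, h2⟩ := (List.append_cons_inj_of_notMem hA hB).1 h.2.symm
      rw [h1, h2]
  · refine (unitS_apply_of_ne fun hp => h ?_).symm
    simp only [Prod.mk.injEq] at hp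
    obtain ⟨rfl, rfl⟩ := hp
    exact ⟨hwf, rfl⟩

end PathSeries


section TwoSidedSpan

variable (K : Type) {R : Type} [CommSemiring K] [Ring R] [Algebra K R]

def twoSidedSpanSubmodule (T : Set R) : Submodule K R where
  carrier := twoSidedSpan T
  zero_mem' := ⟨[], by simp, by simp⟩
  add_mem' := by
    rintro _ _ ⟨l₁, h₁, rfl⟩ ⟨l₂, h₂, rfl⟩
    exact ⟨l₁ ++ l₂, fun q hq => (List.mem_append.1 hq).elim (h₁ q) (h₂ q), by simp⟩
  smul_mem' := by
    rintro c _ ⟨l, h, rfl⟩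
    refine ⟨l.map fun q => (c • q.1, q.2), fun q hq => ?_, ?_⟩
    · obtain ⟨r, hr, rfl⟩ := List.mem_map.1 hq
      exact h r hr
    · simp [List.smul_sum, Function.comp_def]

variable {K}

theorem mul_mul_mem_twoSidedSpanSubmodule {T : Set R} {t : R} (ht : t ∈ T) (a b : R) :
    a * t * b ∈ twoSidedSpanSubmodule K T :=
  ⟨[(a, t, b)], by simpa using ht, by simp⟩

end TwoSidedSpan

section MadicClosure

open Series

variable {K : Type} [Field K] {Q : Quiv V} {I : Submodule K (pathAlg K Q)}

theorem unitPA_mem_madicClosurePA {p : Q.Pth} (hp : Q.WF p)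
    (h : ∀ n : ℕ, ∃ (q : Q.Pth) (hq : Q.WF q) (c : K),
      n ≤ q.2.length ∧ unitPA hp ≡ c • unitPA hq [SMOD I]) :
    unitPA hp ∈ madicClosurePA (I : Set (pathAlg K Q)) := by
  intro n
  obtain ⟨q, hq, c, hn, hpq⟩ := h n
  refine ⟨unitPA hp - c • unitPA hq, SModEq.sub_mem.1 hpq, fun p' hp' => ?_⟩
  change unitS p p' = unitS p p' - c * unitS q p'
  rw [unitS_apply_of_ne (p := q) (fun h => by subst h; omega), mul_zero, sub_zero]

theorem mem_madicClosurePA_of_forall_length_lt [Finite V] [Finite Q.E] {N : ℕ}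
    (hI : ∀ (p : Q.Pth) (hp : Q.WF p), N ≤ p.2.length →
      unitPA hp ∈ madicClosurePA (I : Set (pathAlg K Q)))
    {u : pathAlg K Q} (hu : ∀ p : Q.Pth, p.2.length < N → (u : Series K Q) p = 0) :
    u ∈ madicClosurePA (I : Set (pathAlg K Q)) := by
  intro n
  have hd : ∀ p : Q.Pth, ∃ d ∈ I, ∀ p' : Q.Pth, p'.2.length < n →
      (u : Series K Q) p * (d : Series K Q) p' = (u : Series K Q) p * unitS p p' := by
    intro p
    by_cases hp : Q.WF p ∧ N ≤ p.2.length
    · obtain ⟨d, hd, hdp⟩ := hI p hp.1 hp.2 n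
      exact ⟨d, hd, fun p' hp' => by rw [← hdp p' hp']; rfl⟩
    · have hup : (u : Series K Q) p = 0 := by
        by_cases hwf : Q.WF p
        · exact hu p (not_le.1 (not_and.1 hp hwf))
        · exact u.2 p hwf
      exact ⟨0, I.zero_mem, fun p' _ => by rw [hup, zero_mul, zero_mul]⟩
  choose d hdI hd using hd
  have hfin : {p : Q.Pth | p.2.length < n}.Finite :=
    (Set.finite_univ.prod (List.finite_length_lt Q.E n)).subset fun p hp => ⟨trivial, hp⟩
  refine ⟨∑ p ∈ hfin.toFinset, (u : Series K Q) p • d p,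
    I.sum_mem fun p _ => I.smul_mem _ (hdI p), fun p' hp' => ?_⟩
  rw [AddSubmonoidClass.coe_finsetSum, Series.sum_apply]
  simp only [Subalgebra.coe_smul, Series.smul_apply, hd _ p' hp']
  rw [Finset.sum_eq_single_of_mem p' (hfin.mem_toFinset.2 hp'), unitS_apply_self, mul_one]
  exact fun p _ hp => by rw [unitS_apply_of_ne hp.symm, mul_zero]

theorem exists_eq_sum_add_mem_madicClosurePA [Finite V] [Finite Q.E] {N : ℕ}
    (hI : ∀ (p : Q.Pth) (hp : Q.WF p), N ≤ p.2.length →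
      unitPA hp ∈ madicClosurePA (I : Set (pathAlg K Q)))
    (s : Finset Q.Pth) (hs : ∀ p : Q.Pth, p.2.length < N → p ∈ s) (u : pathAlg K Q) :
    ∃ w ∈ madicClosurePA (I : Set (pathAlg K Q)),
      (u : Series K Q) = ∑ p ∈ s, (u : Series K Q) p • unitS p + (w : Series K Q) := by
  have hsum : (∑ p ∈ s, (u : Series K Q) p • unitS p : Series K Q) ∈ pathAlg K Q := by
    refine Subalgebra.sum_mem _ fun p _ => ?_
    by_cases hp : Q.WF p
    · exact Subalgebra.smul_mem _ (unitS_mem hp) _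
    · rw [u.2 p hp, zero_smul]
      exact zero_mem _
  have hw : ((u - ⟨_, hsum⟩ : pathAlg K Q) : Series K Q)
      = (u : Series K Q) - ∑ p ∈ s, (u : Series K Q) p • unitS p := rfl
  refine ⟨u - ⟨_, hsum⟩, mem_madicClosurePA_of_forall_length_lt hI fun p hp => ?_, ?_⟩
  · rw [hw, Series.sub_apply, sub_eq_zero]
    exact ((sum_smul_unitS_apply s _ p).trans (if_pos (hs p hp))).symm
  · rw [hw, add_sub_cancel]

end MadicClosure

namespace Torus

open Series

/- `torusQ.E` is `Fin 6` only after unfolding `torusQ`; these instances let us compute with and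
decide statements about arrows directly. -/
instance : DecidableEq torusQ.E := inferInstanceAs (DecidableEq (Fin 6))
instance : Fintype torusQ.E := inferInstanceAs (Fintype (Fin 6))
instance : Add torusQ.E := inferInstanceAs (Add (Fin 6))
instance (n : ℕ) : OfNat torusQ.E n := inferInstanceAs (OfNat (Fin 6) n)

/-- The successor of an arrow along the 6-cycle `c2, b1, a2, c1, b2, a1` of `S`; the 3-cycles
of `S` are `e, e + 2, e + 4`. -/
def next (e : torusQ.E) : torusQ.E := ![3, 2, 5, 4, 1, 0] e

/-- The rest of the 3-cycle, resp. the 6-cycle, of `S` after `g`: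
`∂_g S = shortWord g + x • longWord g`. -/
def shortWord (g : torusQ.E) : List torusQ.E := [g + 2, g + 4]

def longWord (g : torusQ.E) : List torusQ.E :=
  [next g, next^[2] g, next^[3] g, next^[4] g, next^[5] g]

/-- `A ++ g :: B` is the word of the 3-cycle of `S` through `g` (based at vertex `0`) for
`(A, B) = cyc3Split g`; likewise `cyc6Split` for the 6-cycle, while `otherCyc3 g` is the
3-cycle avoiding `g`. -/
def cyc3Split (g : torusQ.E) : List torusQ.E × List torusQ.E :=
  ![([], [2, 4]), ([], [3, 5]), ([0], [4]), ([1], [5]), ([0, 2], []), ([1, 3], [])] g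

def otherCyc3 (g : torusQ.E) : List torusQ.E :=
  ![[1, 3, 5], [0, 2, 4], [1, 3, 5], [0, 2, 4], [1, 3, 5], [0, 2, 4]] g

def cyc6Split (g : torusQ.E) : List torusQ.E × List torusQ.E :=
  ![([1, 2, 5], [3, 4]), ([], [2, 5, 0, 3, 4]), ([1], [5, 0, 3, 4]), ([1, 2, 5, 0], [4]),
    ([1, 2, 5, 0, 3], []), ([1, 2], [0, 3, 4])] g

theorem cyc3Split_spec : ∀ g : torusQ.E, g ∉ (cyc3Split g).1 ∧ g ∉ (cyc3Split g).2 ∧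
    (cyc3Split g).2 ++ (cyc3Split g).1 = shortWord g ∧
    torusQ.endV (torusQ.t g, (cyc3Split g).2) = 0 := by
  decide

theorem cyc6Split_spec : ∀ g : torusQ.E, g ∉ (cyc6Split g).1 ∧ g ∉ (cyc6Split g).2 ∧
    (cyc6Split g).2 ++ (cyc6Split g).1 = longWord g ∧
    torusQ.endV (torusQ.t g, (cyc6Split g).2) = 0 := by
  decide

theorem notMem_otherCyc3 : ∀ g : torusQ.E, g ∉ otherCyc3 g := by decide

theorem wf_shortWord (g : torusQ.E) : torusQ.WF (torusQ.t g, shortWord g) := by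
  rw [Quiv.wf_iff]; revert g; decide

theorem wf_longWord (g : torusQ.E) : torusQ.WF (torusQ.t g, longWord g) := by
  rw [Quiv.wf_iff]; revert g; decide

theorem endV_shortWord : ∀ g : torusQ.E, torusQ.endV (torusQ.t g, shortWord g) = torusQ.s g := by
  decide

theorem endV_longWord : ∀ g : torusQ.E, torusQ.endV (torusQ.t g, longWord g) = torusQ.s g := by
  decide

variable {K : Type} [Field K]

theorem torusS_eq (x : K) (g : torusQ.E) :
    torusS K x = unitS (0, (cyc3Split g).1 ++ g :: (cyc3Split g).2) + unitS (0, otherCyc3 g)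
      + x • unitS (0, (cyc6Split g).1 ++ g :: (cyc6Split g).2) := by
  have h6 : ((0 : Fin 3), (cyc6Split g).1 ++ g :: (cyc6Split g).2) = torusCyc6 := by
    revert g; decide
  have h3 : ((0 : Fin 3), (cyc3Split g).1 ++ g :: (cyc3Split g).2) = torusCyc1 ∧
        ((0 : Fin 3), otherCyc3 g) = torusCyc2 ∨
      ((0 : Fin 3), (cyc3Split g).1 ++ g :: (cyc3Split g).2) = torusCyc2 ∧
        ((0 : Fin 3), otherCyc3 g) = torusCyc1 := by
    revert g; decide
  rw [h6]
  rcases h3 with ⟨h1, h2⟩ | ⟨h1, h2⟩ <;> rw [h1, h2, torusS]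
  rw [add_comm (unitS torusCyc2)]

theorem cycDeriv_torusS (x : K) (g : torusQ.E) :
    cycDeriv (torusS K x) g
      = unitS (torusQ.t g, shortWord g) + x • unitS (torusQ.t g, longWord g) := by
  obtain ⟨hA3, hB3, hBA3, hc3⟩ := cyc3Split_spec g
  obtain ⟨hA6, hB6, hBA6, hc6⟩ := cyc6Split_spec g
  rw [torusS_eq x g, cycDeriv_add, cycDeriv_add, cycDeriv_smul,
    cycDeriv_unitS_of_notMem (notMem_otherCyc3 g), add_zero,
    cycDeriv_unitS_of_eq_append_cons hA3 hB3 (hBA3 ▸ wf_shortWord g) hc3,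
    cycDeriv_unitS_of_eq_append_cons hA6 hB6 (hBA6 ▸ wf_longWord g) hc6, hBA3, hBA6]

abbrev jacobSpan (K : Type) [Field K] (x : K) : Submodule K (pathAlg K torusQ) :=
  twoSidedSpanSubmodule K (Set.range (cycDerivPA (torusSPA K x)))

theorem wf_append_shortWord_append_iff {i : Fin 3} {u v : List torusQ.E} {g : torusQ.E} :
    torusQ.WF (i, u ++ shortWord g ++ v) ↔ torusQ.WF (i, u ++ longWord g ++ v) := by
  rw [Quiv.wf_append_append_iff (wf_shortWord g) (by simp [shortWord]),
    Quiv.wf_append_append_iff (wf_longWord g) (by simp [longWord]),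
    endV_shortWord, endV_longWord]

theorem unitPA_shortWord_smodEq (x : K) {i : Fin 3} {u v : List torusQ.E} {g : torusQ.E}
    (hs : torusQ.WF (i, u ++ shortWord g ++ v)) (hl : torusQ.WF (i, u ++ longWord g ++ v)) :
    unitPA hs ≡ (-x) • unitPA hl [SMOD jacobSpan K x] := by
  obtain ⟨hu, hi, hv⟩ := (Quiv.wf_append_append_iff (wf_shortWord g) (by simp [shortWord])).1 hs
  rw [endV_shortWord] at hv
  rw [SModEq.sub_mem, neg_smul, sub_neg_eq_add]
  convert mul_mul_mem_twoSidedSpanSubmodule (K := K) (Set.mem_range_self g) (unitPA hu) (unitPA hv)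
  apply Subtype.ext
  change unitS _ + x • unitS _ = unitS (i, u) * cycDeriv (torusS K x) g * unitS (torusQ.s g, v)
  rw [cycDeriv_torusS, mul_add, add_mul, mul_smul_comm, smul_mul_assoc,
    unitS_mul_unitS_mul_unitS hi (endV_shortWord g), unitS_mul_unitS_mul_unitS hi (endV_longWord g)]

theorem exists_smodEq_longWord (x : K) {i : Fin 3} {w u v : List torusQ.E} {g : torusQ.E}
    (hw : torusQ.WF (i, w)) (h : w = u ++ shortWord g ++ v) :
    ∃ hl : torusQ.WF (i, u ++ longWord g ++ v),
      unitPA hw ≡ (-x) • unitPA hl [SMOD jacobSpan K x] := by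
  subst h
  exact ⟨_, unitPA_shortWord_smodEq x hw (wf_append_shortWord_append_iff.1 hw)⟩

theorem exists_smodEq_shortWord {x : K} (hx : x ≠ 0) {i : Fin 3} {w u v : List torusQ.E}
    {g : torusQ.E} (hw : torusQ.WF (i, w)) (h : w = u ++ longWord g ++ v) :
    ∃ hs : torusQ.WF (i, u ++ shortWord g ++ v),
      unitPA hw ≡ (-x⁻¹) • unitPA hs [SMOD jacobSpan K x] := by
  subst h
  have hs := wf_append_shortWord_append_iff.2 hw
  refine ⟨hs, ?_⟩
  have h := ((unitPA_shortWord_smodEq x hs hw).smul (-x⁻¹)).symm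
  rwa [smul_smul, neg_mul_neg, inv_mul_cancel₀ hx, one_smul] at h

/-- Consecutive arrows `e, f` of a path are matched if they lie on a common 3-cycle of `S`. -/
def Matched (e f : torusQ.E) : Prop := f = e + 2

instance : DecidableRel Matched := fun e f => inferInstanceAs (Decidable (f = e + 2))

def HasSwitch (w : List torusQ.E) : Prop :=
  ∃ u v a b c, w = u ++ a :: b :: c :: v ∧ Xor (Matched a b) (Matched b c)

theorem not_matched_next : ∀ e : torusQ.E, ¬Matched e (next e) := by decide

theorem eq_next_of_not_matched :
    ∀ e f : torusQ.E, torusQ.t e = torusQ.s f → ¬Matched e f → f = next e := by decide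

theorem shortWord_of_matched : ∀ a b : torusQ.E, Matched a b → shortWord (b + 2) = [a, b] := by
  decide

theorem matched_add_four : ∀ g : torusQ.E, Matched (g + 4) g := by decide

theorem matched_next_iterate_five :
    ∀ b c : torusQ.E, torusQ.t b = torusQ.s c → ¬Matched b c → Matched (next^[5] (b + 2)) c := by
  decide

theorem not_matched_next_iterate_five :
    ∀ b c : torusQ.E, Matched b c → ¬Matched (next^[5] (b + 2)) c := by decide

theorem matched_next_add_two : ∀ a b c : torusQ.E,
    torusQ.t a = torusQ.s b → ¬Matched a b → Matched b c → Matched a (next (c + 2)) := by decide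

theorem longWord_next_iterate_five : ∀ f : torusQ.E,
    longWord (next^[5] f) = [f, next f, next (next f), next (next (next f)),
      next (next (next (next f)))] := by decide

theorem exists_smodEq_of_hasSwitch (x : K) {i : Fin 3} {w : List torusQ.E}
    (hw : torusQ.WF (i, w)) (hsw : HasSwitch w) :
    ∃ (w' : List torusQ.E) (hw' : torusQ.WF (i, w')), w.length < w'.length ∧ HasSwitch w' ∧
      unitPA hw ≡ (-x) • unitPA hw' [SMOD jacobSpan K x] := by
  obtain ⟨u, v, a, b, c, rfl, ⟨hab, hbc⟩ | ⟨hbc, hab⟩⟩ := hsw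
  · obtain ⟨hl, h⟩ := exists_smodEq_longWord x hw (u := u) (v := c :: v) (g := b + 2)
      (by simp [shortWord_of_matched a b hab])
    have hmatched :=
      matched_next_iterate_five b c (hw.t_eq_s (u := u ++ [a]) (v := v) (by simp)) hbc
    refine ⟨_, hl, by simp [longWord], ⟨u ++ [next (b + 2), next^[2] (b + 2), next^[3] (b + 2)],
      v, next^[4] (b + 2), next^[5] (b + 2), c, by simp [longWord],
      Or.inr ⟨hmatched, not_matched_next _⟩⟩, h⟩
  · obtain ⟨hl, h⟩ := exists_smodEq_longWord x hw (u := u ++ [a]) (v := v) (g := c + 2)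
      (by simp [shortWord_of_matched b c hbc])
    have hmatched := matched_next_add_two a b c (hw.t_eq_s rfl) hab hbc
    refine ⟨_, hl, by simp [longWord],
      ⟨u, [next^[3] (c + 2), next^[4] (c + 2), next^[5] (c + 2)] ++ v, a, next (c + 2),
        next^[2] (c + 2), by simp [longWord], Or.inl ⟨hmatched, not_matched_next _⟩⟩, h⟩

theorem exists_long_smodEq_of_hasSwitch (x : K) (n : ℕ) {i : Fin 3} {w : List torusQ.E}
    (hw : torusQ.WF (i, w)) (hsw : HasSwitch w) :
    ∃ (w' : List torusQ.E) (hw' : torusQ.WF (i, w')) (c : K), w.length + n ≤ w'.length ∧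
      unitPA hw ≡ c • unitPA hw' [SMOD jacobSpan K x] := by
  induction n generalizing w with
  | zero => exact ⟨w, hw, 1, le_rfl, by rw [one_smul]⟩
  | succ n ih =>
    obtain ⟨w₁, hw₁, hlen₁, hsw₁, h₁⟩ := exists_smodEq_of_hasSwitch x hw hsw
    obtain ⟨w', hw', c, hlen, h⟩ := ih hw₁ hsw₁
    exact ⟨w', hw', -x * c, by omega, h₁.trans (by simpa [smul_smul] using h.smul (-x))⟩

theorem exists_hasSwitch_smodEq_of_isChain_matched (x : K) {i : Fin 3} {w : List torusQ.E}
    (hw : torusQ.WF (i, w)) (hM : w.IsChain Matched) (h4 : 4 ≤ w.length) :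
    ∃ (w' : List torusQ.E) (hw' : torusQ.WF (i, w')), HasSwitch w' ∧
      unitPA hw ≡ (-x) • unitPA hw' [SMOD jacobSpan K x] := by
  rcases w with _ | ⟨a, _ | ⟨b, _ | ⟨c, _ | ⟨d, v⟩⟩⟩⟩ <;>
    simp only [List.length_cons, List.length_nil] at h4 <;> try omega
  simp only [List.isChain_cons_cons] at hM
  obtain ⟨hab, hbc, hcd, -⟩ := hM
  obtain ⟨hl, h⟩ := exists_smodEq_longWord x hw (u := []) (v := c :: d :: v) (g := b + 2)
    (by simp [shortWord_of_matched a b hab])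
  exact ⟨_, hl, ⟨[next (b + 2), next^[2] (b + 2), next^[3] (b + 2), next^[4] (b + 2)], v, _, c, d,
    by simp [longWord], Or.inr ⟨hcd, not_matched_next_iterate_five b c hbc⟩⟩, h⟩

theorem exists_hasSwitch_smodEq_of_isChain_not_matched {x : K} (hx : x ≠ 0) {i : Fin 3}
    {w : List torusQ.E} (hw : torusQ.WF (i, w)) (hU : w.IsChain fun a b => ¬Matched a b)
    (h7 : 7 ≤ w.length) :
    ∃ (w' : List torusQ.E) (hw' : torusQ.WF (i, w')), HasSwitch w' ∧
      unitPA hw ≡ (-x⁻¹) • unitPA hw' [SMOD jacobSpan K x] := by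
  have hnext : w.IsChain fun e f => f = next e :=
    ((Quiv.wf_iff.1 hw).1.and hU).imp fun e f h => eq_next_of_not_matched e f h.1 h.2
  rcases w with _ | ⟨f, _ | ⟨f1, _ | ⟨f2, _ | ⟨f3, _ | ⟨f4, _ | ⟨f5, _ | ⟨f6, v⟩⟩⟩⟩⟩⟩⟩ <;>
    simp only [List.length_cons, List.length_nil] at h7 <;> try omega
  simp only [List.isChain_cons_cons] at hnext
  obtain ⟨rfl, rfl, rfl, rfl, rfl, rfl, -⟩ := hnext
  obtain ⟨hs, h⟩ := exists_smodEq_shortWord hx hw (u := [])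
    (v := next^[5] f :: next^[6] f :: v) (g := next^[5] f)
    (by rw [longWord_next_iterate_five]; rfl)
  exact ⟨_, hs, ⟨[next^[5] f + 2], v, _, _, next^[6] f, rfl,
    Or.inl ⟨matched_add_four _, not_matched_next _⟩⟩, h⟩

theorem exists_hasSwitch_smodEq {x : K} (hx : x ≠ 0) {i : Fin 3} {w : List torusQ.E}
    (hw : torusQ.WF (i, w)) (h7 : 7 ≤ w.length) :
    ∃ (w' : List torusQ.E) (hw' : torusQ.WF (i, w')) (c : K), HasSwitch w' ∧
      unitPA hw ≡ c • unitPA hw' [SMOD jacobSpan K x] := by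
  rcases List.isChain_or_isChain_not_or_exists_xor Matched w with hM | hU | hsw
  · obtain ⟨w', hw', hsw, h⟩ := exists_hasSwitch_smodEq_of_isChain_matched x hw hM (by omega)
    exact ⟨w', hw', -x, hsw, h⟩
  · obtain ⟨w', hw', hsw, h⟩ := exists_hasSwitch_smodEq_of_isChain_not_matched hx hw hU h7
    exact ⟨w', hw', -x⁻¹, hsw, h⟩
  · exact ⟨w, hw, 1, hsw, by rw [one_smul]⟩

theorem unitPA_mem_jacobSet {x : K} (hx : x ≠ 0) {p : torusQ.Pth} (hp : torusQ.WF p)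
    (h7 : 7 ≤ p.2.length) : unitPA (K := K) hp ∈ jacobSet (torusSPA K x) := by
  obtain ⟨i, w⟩ := p
  obtain ⟨w₁, hw₁, c₁, hsw, h₁⟩ := exists_hasSwitch_smodEq hx hp h7
  refine unitPA_mem_madicClosurePA (I := jacobSpan K x) hp fun n => ?_
  obtain ⟨w', hw', c, hlen, h⟩ := exists_long_smodEq_of_hasSwitch x n hw₁ hsw
  exact ⟨(i, w'), hw', c₁ * c, (Nat.le_add_left n _).trans hlen,
    h₁.trans (by simpa [smul_smul] using h.smul c₁)⟩

end Torus

theorem mem_listsUpTo : ∀ {n : ℕ} {l : List (Fin 6)}, l ∈ listsUpTo n ↔ l.length ≤ n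
  | 0, l => by cases l <;> simp [listsUpTo]
  | n + 1, [] => by simp [listsUpTo]
  | n + 1, e :: l => by simp [listsUpTo, mem_listsUpTo]

theorem mem_torusPathsUpTo {n : ℕ} {p : torusQ.Pth} : p ∈ torusPathsUpTo n ↔ p.2.length ≤ n :=
  Finset.mem_product.trans
    ⟨fun h => mem_listsUpTo.1 h.2, fun h => ⟨Finset.mem_univ _, mem_listsUpTo.2 h⟩⟩

end QPF

open QPF in
/-- In the quiver with potential of the canonical triangulation of the
once-punctured torus, every path of length at least `7` lies in the Jacobian ideal
`J(S)`; consequently the Jacobian algebra `P(Q,S)` is spanned by the residues of the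
paths of length at most `6`. -/
theorem torus_paths_of_length_seven_in_jacobian_ideal
    {K : Type} [Field K] (x : K) (hx : x ≠ 0) :
    (∀ (p : torusQ.Pth) (hp : torusQ.WF p), 7 ≤ p.2.length →
      unitPA (K := K) hp ∈ jacobSet (torusSPA K x)) ∧
    ∀ u : pathAlg K torusQ, ∃ c : torusQ.Pth → K,
      (∀ p : torusQ.Pth, ¬ torusQ.WF p → c p = 0) ∧
      ∃ w ∈ jacobSet (torusSPA K x),
        (u : Series K torusQ)
          = (∑ p ∈ torusPathsUpTo 6, c p • unitS p) + (w : Series K torusQ) := by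
  have hlong : ∀ (p : torusQ.Pth) (hp : torusQ.WF p), 7 ≤ p.2.length →
      unitPA (K := K) hp ∈ jacobSet (torusSPA K x) :=
    fun p hp h7 => Torus.unitPA_mem_jacobSet hx hp h7
  refine ⟨hlong, fun u => ⟨fun p => (u : Series K torusQ) p, fun p hp => u.2 p hp, ?_⟩⟩
  exact exists_eq_sum_add_mem_madicClosurePA (I := Torus.jacobSpan K x) hlong _
    (fun p hp => mem_torusPathsUpTo.2 (Nat.le_of_lt_succ hp)) u
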